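/- Concave-convex regret decomposition, reward part (Proposition C.2): Let f : ℝ → ℝ be L-Lipschitz. Fix a true transition function p★, true reward r★ : S × A → [0,1], true consumptions c★_i : S × A → [0,1] (i ∈ D), estimates p̂, r̂, (ĉ_i)_{i∈D}, a bonus b : S × A → ℝ with b ≥ 0, and a function g : ℝ^D → ℝ. Let π★ be a policy with g( (V_{c★_i}^{π★,p★}(s0,1))_{i∈D} ) ≤ 0, and assume the bonus is valid with respect to π★ for the reward and each consumption objective (as in Definition 3.1). Let (π_k, r^{(k)}) be an optimal solution of the ConvexConPlanner program: |r^{(k)}(s,a) − r̂(s,a)| ≤ b(s,a) for all s, a; there exist c_i with |c_i(s,a) − ĉ_i(s,a)| ≤ b(s,a) and g( (V_{c_i}^{π_k,p̂}(s0,1))_{i∈D} ) ≤ 0; and f(V_{r^{(k)}}^{π_k,p̂}(s0,1)) ≥ f(V_{r'}^{π,p̂}(s0,1)) for every policy π and reward r' with |r'(s,a) − r̂(s,a)| ≤ b(s,a) that is feasible for the program's constraint. Then f(V_{r★}^{π★,p★}(s0,1)) − f(V_{r★}^{π_k,p★}(s0,1)) ≤ L · E^{π_k,p★}[ Σ_{h=1}^H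 | Bell_{r^{(k)}}^{π_k,p̂}(s_h, a_h, h) | | s_1 = s0 ], where the Bellman error is taken with respect to the true pair (p★, r★). -/

import Mathlib

open Finset

section MDPDefs

variable {S A : Type*} [Fintype S] [Fintype A]

/-- Expected cumulative sum of a step-dependent objective `φ h s a`, defined by
backward recursion on the number `n` of remaining steps, where `h` is the current stage. -/
noncomputable def EValAux (π : ℕ → S → PMF A) (p : S → A → PMF S)
    (φ : ℕ → S → A → ℝ) : ℕ → ℕ → S → ℝ
  | 0, _, _ => 0
  | n + 1, h, s =>
      ∑ a : A, (π h s a).toReal *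
        (φ h s a + ∑ s' : S, (p s a s').toReal * EValAux π p φ n (h + 1) s')

/-- `EVal H π p φ h s = E^{π,p}[ Σ_{h'=h}^H φ(h', s_{h'}, a_{h'}) | s_h = s ]`. -/
noncomputable def EVal (H : ℕ) (π : ℕ → S → PMF A) (p : S → A → PMF S)
    (φ : ℕ → S → A → ℝ) (h : ℕ) (s : S) : ℝ :=
  EValAux π p φ (H + 1 - h) h s

/-- Value function `V_m^{π,p}(s,h)` of the objective `m` for horizon `H`. -/
noncomputable def Vf (H : ℕ) (π : ℕ → S → PMF A) (p : S → A → PMF S)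
    (m : S → A → ℝ) (h : ℕ) (s : S) : ℝ :=
  EVal H π p (fun _ s a => m s a) h s

/-- Q-function `Q_m^{π,p}(s,a,h)` of the objective `m` for horizon `H`. -/
noncomputable def Qf (H : ℕ) (π : ℕ → S → PMF A) (p : S → A → PMF S)
    (m : S → A → ℝ) (h : ℕ) (s : S) (a : A) : ℝ :=
  m s a + ∑ s' : S, (p s a s').toReal * Vf H π p m (h + 1) s'

/-- Bellman error of the model `(p, m)` under policy `π`, with respect to the
true transition function `pstar` and true objective `mstar`. -/
noncomputable def Bell (H : ℕ) (π : ℕ → S → PMF A) (p : S → A → PMF S) (m : S → A → ℝ)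
    (pstar : S → A → PMF S) (mstar : S → A → ℝ) (h : ℕ) (s : S) (a : A) : ℝ :=
  Qf H π p m h s a - (mstar s a + ∑ s' : S, (pstar s a s').toReal * Vf H π p m (h + 1) s')

end MDPDefs

/-!
Validity of the bonus says that the Bellman error of `(p̂, m̂)` measured against `(p★, m★)`
under `π★` is at most `b`, so by the simulation lemma the optimistic value `V_{m̂}^{π★,p̂}`
is within `V_b^{π★,p̂}` of the true value `V_{m★}^{π★,p★}`. As `t ↦ V_{m̂ + t b}^{π★,p̂}` is
affine, some `t ∈ [-1, 1]` yields an objective inside the confidence set whose optimistic value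
is exactly the true one. Doing this for the reward and every consumption makes `π★` feasible
for the planner, whence `f(V_{r★}^{π★,p★}) ≤ f(V_{r_k}^{π_k,p̂})`. The simulation lemma for `π_k`
and the Lipschitz bound on `f` then finish the proof.
-/

lemma exists_abs_le_one_mul_eq {x y : ℝ} (h : |x| ≤ y) : ∃ t : ℝ, |t| ≤ 1 ∧ t * y = x := by
  refine ⟨x / y, ?_, ?_⟩
  · rw [abs_div, abs_of_nonneg ((abs_nonneg x).trans h)]
    exact div_le_one_of_le₀ h ((abs_nonneg x).trans h)
  · rcases eq_or_ne y 0 with rfl | hy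
    · simp [abs_nonpos_iff.mp h]
    · exact div_mul_cancel₀ x hy

lemma abs_sum_toReal_mul_le {ι : Type*} [Fintype ι] (w : ι → ENNReal) (x : ι → ℝ) :
    |∑ i, (w i).toReal * x i| ≤ ∑ i, (w i).toReal * |x i| := by
  simpa only [abs_mul, ENNReal.abs_toReal] using
    Finset.abs_sum_le_sum_abs (fun i => (w i).toReal * x i) Finset.univ

section MDP

variable {S A : Type*} [Fintype S] [Fintype A]

lemma EValAux_add_mul (π : ℕ → S → PMF A) (p : S → A → PMF S) (φ ψ : ℕ → S → A → ℝ) (t : ℝ)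
    (n h : ℕ) (s : S) :
    EValAux π p (fun h s a => φ h s a + t * ψ h s a) n h s =
      EValAux π p φ n h s + t * EValAux π p ψ n h s := by
  induction n generalizing h s with
  | zero => simp [EValAux]
  | succ n ih =>
    simp only [EValAux, ih, mul_add, Finset.sum_add_distrib, Finset.mul_sum, mul_left_comm t]
    ring

lemma abs_EValAux_le (π : ℕ → S → PMF A) (p : S → A → PMF S) {φ ψ : ℕ → S → A → ℝ}
    (n h : ℕ) (s : S) (hφψ : ∀ h', h ≤ h' → h' < h + n → ∀ s a, |φ h' s a| ≤ ψ h' s a) :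
    |EValAux π p φ n h s| ≤ EValAux π p ψ n h s := by
  induction n generalizing h s with
  | zero => simp [EValAux]
  | succ n ih =>
    have hnext : ∀ s', |EValAux π p φ n (h + 1) s'| ≤ EValAux π p ψ n (h + 1) s' :=
      fun s' => ih (h + 1) s' fun h' h1 h2 => hφψ h' (by omega) (by omega)
    refine (abs_sum_toReal_mul_le _ _).trans (Finset.sum_le_sum fun a _ => ?_)
    gcongr
    refine (abs_add_le _ _).trans (add_le_add (hφψ h le_rfl (by omega) s a) ?_)
    exact (abs_sum_toReal_mul_le _ _).trans (by gcongr; exact hnext _)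

lemma abs_EVal_le (H : ℕ) (π : ℕ → S → PMF A) (p : S → A → PMF S) {φ ψ : ℕ → S → A → ℝ}
    (h : ℕ) (s : S) (hφψ : ∀ h', h ≤ h' → h' ≤ H → ∀ s a, |φ h' s a| ≤ ψ h' s a) :
    |EVal H π p φ h s| ≤ EVal H π p ψ h s :=
  abs_EValAux_le π p _ h s fun h' h1 h2 => hφψ h' h1 (by omega)

lemma Vf_add_mul (H : ℕ) (π : ℕ → S → PMF A) (p : S → A → PMF S) (m b : S → A → ℝ) (t : ℝ)
    (h : ℕ) (s : S) :
    Vf H π p (fun s a => m s a + t * b s a) h s = Vf H π p m h s + t * Vf H π p b h s :=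
  EValAux_add_mul π p _ _ t _ h s

lemma Bell_eq (H : ℕ) (π : ℕ → S → PMF A) (p q : S → A → PMF S) (m m' : S → A → ℝ)
    (h : ℕ) (s : S) (a : A) :
    Bell H π p m q m' h s a =
      (m s a - m' s a) + ∑ s', ((p s a s').toReal - (q s a s').toReal) * Vf H π p m (h + 1) s' := by
  simp only [Bell, Qf, sub_mul, Finset.sum_sub_distrib]
  ring

lemma Vf_sub_Vf_eq_EVal_Bell (H : ℕ) (π : ℕ → S → PMF A) (p q : S → A → PMF S)
    (m m' : S → A → ℝ) (h : ℕ) (s : S) :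
    Vf H π p m h s - Vf H π q m' h s = EVal H π q (Bell H π p m q m') h s := by
  suffices ∀ n h s, H + 1 - h = n →
      EValAux π p (fun _ s a => m s a) n h s - EValAux π q (fun _ s a => m' s a) n h s =
        EValAux π q (Bell H π p m q m') n h s from this _ h s rfl
  intro n
  induction n with
  | zero => simp [EValAux]
  | succ n ih =>
    intro h s hn
    have hVf : ∀ s', Vf H π p m (h + 1) s' = EValAux π p (fun _ s a => m s a) n (h + 1) s' := by
      intro s'
      simp only [Vf, EVal, show H + 1 - (h + 1) = n by omega]
    simp only [EValAux, Bell, Qf, hVf, ← ih (h + 1) _ (by omega), ← Finset.sum_sub_distrib,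
      ← mul_sub]
    refine Finset.sum_congr rfl fun a _ => ?_
    simp only [mul_sub, Finset.sum_sub_distrib]
    ring

lemma exists_Vf_eq_of_valid (H : ℕ) (s0 : S) (π : ℕ → S → PMF A) (pstar phat : S → A → PMF S)
    (mstar mhat b : S → A → ℝ) (hb : ∀ s a, 0 ≤ b s a)
    (hvalid : ∀ s a h, 1 ≤ h → h ≤ H →
      |(mhat s a - mstar s a) + ∑ s' : S, ((phat s a s').toReal - (pstar s a s').toReal) *
          Vf H π pstar mstar (h + 1) s'| ≤ b s a) :
    ∃ m : S → A → ℝ, (∀ s a, |m s a - mhat s a| ≤ b s a) ∧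
      Vf H π phat m 1 s0 = Vf H π pstar mstar 1 s0 := by
  have hgap : |Vf H π pstar mstar 1 s0 - Vf H π phat mhat 1 s0| ≤ Vf H π phat b 1 s0 := by
    rw [Vf_sub_Vf_eq_EVal_Bell]
    refine abs_EVal_le H π phat 1 s0 fun h h1 h2 s a => ?_
    rw [Bell_eq, ← abs_neg]
    simpa only [neg_add, neg_sub, ← Finset.sum_neg_distrib, ← neg_mul] using hvalid s a h h1 h2
  obtain ⟨t, ht, hteq⟩ := exists_abs_le_one_mul_eq hgap
  refine ⟨fun s a => mhat s a + t * b s a, fun s a => ?_, ?_⟩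
  · rw [add_sub_cancel_left, abs_mul, abs_of_nonneg (hb s a)]
    exact mul_le_of_le_one_left (hb s a) ht
  · rw [Vf_add_mul]
    linarith

end MDP

theorem concave_convex_regret_decomposition_reward_general
    {S A D : Type*} [Fintype S] [Fintype A]
    (H : ℕ) (s0 : S) (L : ℝ)
    (f : ℝ → ℝ) (g : (D → ℝ) → ℝ)
    (hf : ∀ x y : ℝ, |f x - f y| ≤ L * |x - y|)
    (pstar phat : S → A → PMF S)
    (rstar rhat : S → A → ℝ) (cstar chat : D → S → A → ℝ) (b : S → A → ℝ)
    (hb : ∀ s a, 0 ≤ b s a)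
    (πstar : ℕ → S → PMF A)
    -- π★ satisfies the true convex constraint
    (hgstar : g (fun i => Vf H πstar pstar (cstar i) 1 s0) ≤ 0)
    -- the bonus is valid with respect to π★ for the reward objective ...
    (hvalid_r : ∀ s a h, 1 ≤ h → h ≤ H →
      |(rhat s a - rstar s a)
          + ∑ s' : S, ((phat s a s').toReal - (pstar s a s').toReal) *
              Vf H πstar pstar rstar (h + 1) s'|
        ≤ b s a)
    -- ... and for each consumption objective
    (hvalid_c : ∀ i : D, ∀ s a h, 1 ≤ h → h ≤ H →
      |(chat i s a - cstar i s a)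
          + ∑ s' : S, ((phat s a s').toReal - (pstar s a s').toReal) *
              Vf H πstar pstar (cstar i) (h + 1) s'|
        ≤ b s a)
    (πk : ℕ → S → PMF A) (rk : S → A → ℝ)
    -- ... and is optimal for the ConvexConPlanner program
    (hopt_k : ∀ π : ℕ → S → PMF A, ∀ r' : S → A → ℝ,
      (∀ s a, |r' s a - rhat s a| ≤ b s a) →
      (∃ c : D → S → A → ℝ,
        (∀ i s a, |c i s a - chat i s a| ≤ b s a)
        ∧ g (fun i => Vf H π phat (c i) 1 s0) ≤ 0) →
      f (Vf H πk phat rk 1 s0) ≥ f (Vf H π phat r' 1 s0)) :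
    f (Vf H πstar pstar rstar 1 s0) - f (Vf H πk pstar rstar 1 s0)
      ≤ L * EVal H πk pstar
            (fun h s a => |Bell H πk phat rk pstar rstar h s a|) 1 s0 := by
  have hL : 0 ≤ L := by simpa using (abs_nonneg _).trans (hf 0 1)
  obtain ⟨r, hr, hVr⟩ := exists_Vf_eq_of_valid H s0 πstar pstar phat rstar rhat b hb hvalid_r
  choose c hc hVc using fun i =>
    exists_Vf_eq_of_valid H s0 πstar pstar phat (cstar i) (chat i) b hb (hvalid_c i)
  have hstar_le : f (Vf H πstar pstar rstar 1 s0) ≤ f (Vf H πk phat rk 1 s0) := by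
    have := hopt_k πstar r hr ⟨c, hc, by simpa only [hVc] using hgstar⟩
    rwa [hVr] at this
  have hsim : |Vf H πk phat rk 1 s0 - Vf H πk pstar rstar 1 s0|
      ≤ EVal H πk pstar (fun h s a => |Bell H πk phat rk pstar rstar h s a|) 1 s0 := by
    rw [Vf_sub_Vf_eq_EVal_Bell]
    exact abs_EVal_le H πk pstar 1 s0 fun _ _ _ _ _ => le_rfl
  calc f (Vf H πstar pstar rstar 1 s0) - f (Vf H πk pstar rstar 1 s0)
      ≤ |f (Vf H πk phat rk 1 s0) - f (Vf H πk pstar rstar 1 s0)| :=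
        (sub_le_sub_right hstar_le _).trans (le_abs_self _)
    _ ≤ L * |Vf H πk phat rk 1 s0 - Vf H πk pstar rstar 1 s0| := hf _ _
    _ ≤ _ := by gcongr

/-- **Concave-convex regret decomposition, reward part (Proposition C.2).** -/
theorem concave_convex_regret_decomposition_reward
    {S A D : Type*} [Fintype S] [Fintype A] [Fintype D] [Nonempty S] [Nonempty A]
    (H : ℕ) (s0 : S) (L : ℝ)
    (f : ℝ → ℝ) (g : (D → ℝ) → ℝ)
    (hf : ∀ x y : ℝ, |f x - f y| ≤ L * |x - y|)
    (pstar phat : S → A → PMF S)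
    (rstar rhat : S → A → ℝ) (cstar chat : D → S → A → ℝ) (b : S → A → ℝ)
    (hrstar : ∀ s a, rstar s a ∈ Set.Icc (0 : ℝ) 1)
    (hcstar : ∀ i s a, cstar i s a ∈ Set.Icc (0 : ℝ) 1)
    (hb : ∀ s a, 0 ≤ b s a)
    (πstar : ℕ → S → PMF A)
    -- π★ satisfies the true convex constraint
    (hgstar : g (fun i => Vf H πstar pstar (cstar i) 1 s0) ≤ 0)
    -- the bonus is valid with respect to π★ for the reward objective ...
    (hvalid_r : ∀ s a h, 1 ≤ h → h ≤ H →
      |(rhat s a - rstar s a)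
          + ∑ s' : S, ((phat s a s').toReal - (pstar s a s').toReal) *
              Vf H πstar pstar rstar (h + 1) s'|
        ≤ b s a)
    -- ... and for each consumption objective
    (hvalid_c : ∀ i : D, ∀ s a h, 1 ≤ h → h ≤ H →
      |(chat i s a - cstar i s a)
          + ∑ s' : S, ((phat s a s').toReal - (pstar s a s').toReal) *
              Vf H πstar pstar (cstar i) (h + 1) s'|
        ≤ b s a)
    (πk : ℕ → S → PMF A) (rk : S → A → ℝ)
    -- (πk, rk) lies in the feasible region of ConvexConPlanner:
    (hrk : ∀ s a, |rk s a - rhat s a| ≤ b s a)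
    (hfeas_k : ∃ c : D → S → A → ℝ,
      (∀ i s a, |c i s a - chat i s a| ≤ b s a)
      ∧ g (fun i => Vf H πk phat (c i) 1 s0) ≤ 0)
    -- ... and is optimal for the ConvexConPlanner program
    (hopt_k : ∀ π : ℕ → S → PMF A, ∀ r' : S → A → ℝ,
      (∀ s a, |r' s a - rhat s a| ≤ b s a) →
      (∃ c : D → S → A → ℝ,
        (∀ i s a, |c i s a - chat i s a| ≤ b s a)
        ∧ g (fun i => Vf H π phat (c i) 1 s0) ≤ 0) →
      f (Vf H πk phat rk 1 s0) ≥ f (Vf H π phat r' 1 s0)) :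
    f (Vf H πstar pstar rstar 1 s0) - f (Vf H πk pstar rstar 1 s0)
      ≤ L * EVal H πk pstar
            (fun h s a => |Bell H πk phat rk pstar rstar h s a|) 1 s0 :=
  concave_convex_regret_decomposition_reward_general H s0 L f g hf pstar phat rstar rhat cstar chat
    b hb πstar hgstar hvalid_r hvalid_c πk rk hopt_k
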